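/- arXiv:1002.1123 — 5 statements merged into one kernel-verified Lean document; each statement's English description precedes it below -/
import Mathlib

section
/- The deformed bracket {M_i,M_j}_d = ε_{ijk}(M_k/√g(γ) − d√g(γ)·⟨M, Aγ⟩·γ_k), {M_i,γ_j}_d = ε_{ijk} γ_k/√g(γ), {γ_i,γ_j}_d = 0 satisfies the Jacobi identity, i.e. defines a Poisson structure on the open set where g(γ) > 0. -/
open Matrix Filter

noncomputable section

/-- Index type for the phase space ℝ³×ℝ³: `Sum.inl` indexes γ, `Sum.inr` indexes M. -/
abbrev Idx : Type := Fin 3 ⊕ Fin 3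

/-- The phase space ℝ⁶ of the variables (γ, M). -/
abbrev V : Type := Idx → ℝ

/-- The totally antisymmetric Levi-Civita symbol on `Fin 3` with ε₀₁₂ = 1. -/
def eps (i j k : Fin 3) : ℝ :=
  (((i : ℕ) : ℝ) - ((j : ℕ) : ℝ)) * (((j : ℕ) : ℝ) - ((k : ℕ) : ℝ)) *
    (((k : ℕ) : ℝ) - ((i : ℕ) : ℝ)) / 2

def gI (i : Fin 3) : Idx := Sum.inl i
def mI (i : Fin 3) : Idx := Sum.inr i

/-- The γ-part of a phase point. -/
def gPart (x : V) : Fin 3 → ℝ := fun i => x (gI i)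

/-- The M-part of a phase point. -/
def mPart (x : V) : Fin 3 → ℝ := fun i => x (mI i)

/-- Partial derivative of `f` at `x` in the coordinate direction `a`. -/
def pd (f : V → ℝ) (x : V) (a : Idx) : ℝ := fderiv ℝ f x (Pi.single a 1)

/-- Bracket with structure functions `{M_i,M_j} = Σ_k ε_{ijk}·cM x k`,
`{M_i,γ_j} = Σ_k ε_{ijk}·cG x k`, `{γ_i,γ_j} = 0`, extended to functions
via partial derivatives. -/
def bracket (cM cG : V → Fin 3 → ℝ) (f g : V → ℝ) (x : V) : ℝ :=
  ∑ i : Fin 3, ∑ j : Fin 3, ∑ k : Fin 3, eps i j k *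
    (cM x k * pd f x (mI i) * pd g x (mI j)
      + cG x k * (pd f x (mI i) * pd g x (gI j) + pd f x (gI i) * pd g x (mI j)))

/-- Structure functions of the standard Lie–Poisson bracket on e*(3). -/
def cMstd (x : V) : Fin 3 → ℝ := mPart x

def cGstd (x : V) : Fin 3 → ℝ := gPart x

/-- A = diag(a₁,a₂,a₃). -/
def Amat (a₁ a₂ a₃ : ℝ) : Matrix (Fin 3) (Fin 3) ℝ := Matrix.diagonal ![a₁, a₂, a₃]

/-- g(γ) = (1 − d⟨γ, Aγ⟩)⁻¹. -/
def gfun (a₁ a₂ a₃ d : ℝ) (x : V) : ℝ :=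
  (1 - d * (gPart x ⬝ᵥ (Amat a₁ a₂ a₃).mulVec (gPart x)))⁻¹

/-- √g(γ). -/
def sg (a₁ a₂ a₃ d : ℝ) (x : V) : ℝ := Real.sqrt (gfun a₁ a₂ a₃ d x)

/-- ⟨M, Aγ⟩. -/
def MAg (a₁ a₂ a₃ : ℝ) (x : V) : ℝ := mPart x ⬝ᵥ (Amat a₁ a₂ a₃).mulVec (gPart x)

/-- Structure functions `cM` of the deformed (Chaplygin) bracket:
`{M_i,M_j}_d = Σ_k ε_{ijk}(M_k/√g − d√g⟨M,Aγ⟩γ_k)`. -/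
def cMd (a₁ a₂ a₃ d : ℝ) (x : V) : Fin 3 → ℝ := fun k =>
  mPart x k / sg a₁ a₂ a₃ d x - d * sg a₁ a₂ a₃ d x * MAg a₁ a₂ a₃ x * gPart x k

/-- Structure functions `cG` of the deformed bracket: `{M_i,γ_j}_d = Σ_k ε_{ijk} γ_k/√g`. -/
def cGd (a₁ a₂ a₃ d : ℝ) (x : V) : Fin 3 → ℝ := fun k =>
  gPart x k / sg a₁ a₂ a₃ d x

/-- A_d = A + d·g(γ)·(Aγ)⊗(Aγ). -/
def Adm (a₁ a₂ a₃ d : ℝ) (x : V) : Matrix (Fin 3) (Fin 3) ℝ :=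
  Amat a₁ a₂ a₃ + (d * gfun a₁ a₂ a₃ d x) •
    vecMulVec ((Amat a₁ a₂ a₃).mulVec (gPart x)) ((Amat a₁ a₂ a₃).mulVec (gPart x))



namespace PdCalc

lemma pd_const (c : ℝ) (x : V) (a : Idx) : pd (fun _ => c) x a = 0 := by
  unfold pd; simp

lemma pd_coord (b : Idx) (x : V) (a : Idx) :
    pd (fun y => y b) x a = if b = a then 1 else 0 := by
  unfold pd
  have : (fun y : V => y b) = (ContinuousLinearMap.proj (R := ℝ) b : V →L[ℝ] ℝ) := rfl
  rw [this, ContinuousLinearMap.fderiv, ContinuousLinearMap.proj_apply, Pi.single_apply]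

lemma pd_sub {u v : V → ℝ} {x : V} (hu : DifferentiableAt ℝ u x)
    (hv : DifferentiableAt ℝ v x) (a : Idx) :
    pd (fun y => u y - v y) x a = pd u x a - pd v x a := by
  unfold pd; rw [fderiv_fun_sub hu hv]; simp

lemma pd_mul {u v : V → ℝ} {x : V} (hu : DifferentiableAt ℝ u x)
    (hv : DifferentiableAt ℝ v x) (a : Idx) :
    pd (fun y => u y * v y) x a = pd u x a * v x + u x * pd v x a := by
  unfold pd; rw [fderiv_fun_mul hu hv]; simp; ring

lemma pd_cmul {v : V → ℝ} {x : V} (c : ℝ) (hv : DifferentiableAt ℝ v x) (a : Idx) :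
    pd (fun y => c * v y) x a = c * pd v x a := by
  unfold pd; rw [fderiv_const_mul hv]; simp

lemma pd_sum {ι : Type*} {s : Finset ι} {F : ι → V → ℝ} {x : V}
    (h : ∀ i ∈ s, DifferentiableAt ℝ (F i) x) (a : Idx) :
    pd (fun y => ∑ i ∈ s, F i y) x a = ∑ i ∈ s, pd (F i) x a := by
  unfold pd; rw [fderiv_fun_sum h]; simp

lemma pd_inv {v : V → ℝ} {x : V} (hv : DifferentiableAt ℝ v x) (h0 : v x ≠ 0) (a : Idx) :
    pd (fun y => (v y)⁻¹) x a = -(v x ^ 2)⁻¹ * pd v x a := by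
  unfold pd
  have h : HasFDerivAt (fun y => (v y)⁻¹) (-(v x ^ 2)⁻¹ • fderiv ℝ v x) x :=
    (hasDerivAt_inv h0).comp_hasFDerivAt x hv.hasFDerivAt
  rw [h.fderiv]; simp [mul_comm]

lemma pd_sqrt {v : V → ℝ} {x : V} (hv : DifferentiableAt ℝ v x) (h0 : 0 < v x) (a : Idx) :
    pd (fun y => Real.sqrt (v y)) x a = (1 / (2 * Real.sqrt (v x))) * pd v x a := by
  unfold pd
  have h : HasFDerivAt (fun y => Real.sqrt (v y)) ((1 / (2 * Real.sqrt (v x))) • fderiv ℝ v x) x :=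
    (Real.hasDerivAt_sqrt (ne_of_gt h0)).comp_hasFDerivAt x hv.hasFDerivAt
  rw [h.fderiv]; simp [mul_comm]

end PdCalc

section General

/-- Second partial derivative. -/
def H2 (f : V → ℝ) (x : V) (e a : Idx) : ℝ :=
  fderiv ℝ (fderiv ℝ f) x (Pi.single e 1) (Pi.single a 1)

lemma diff_fderiv {f : V → ℝ} (hf : ContDiff ℝ (⊤ : ℕ∞) f) :
    Differentiable ℝ (fderiv ℝ f) :=
  (hf.fderiv_right (m := 1) (WithTop.coe_le_coe.2 le_top)).differentiable one_ne_zero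

lemma diff_pd {f : V → ℝ} (hf : ContDiff ℝ (⊤ : ℕ∞) f) (a : Idx) :
    Differentiable ℝ (fun y => pd f y a) := fun y =>
  ((diff_fderiv hf) y).clm_apply (differentiableAt_const _)

lemma H2_symm {f : V → ℝ} (hf : ContDiff ℝ (⊤ : ℕ∞) f) (x : V) (e a : Idx) :
    H2 f x e a = H2 f x a e :=
  second_derivative_symmetric
    (fun y => ((hf.differentiable (by simp)) y).hasFDerivAt)
    ((diff_fderiv hf x).hasFDerivAt) _ _

lemma pd_pd {f : V → ℝ} (hf : ContDiff ℝ (⊤ : ℕ∞) f) (x : V) (a e : Idx) :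
    pd (fun y => pd f y a) x e = H2 f x e a := by
  unfold pd H2
  rw [fderiv_clm_apply (diff_fderiv hf x) (differentiableAt_const _)]
  simp

/-- A general bracket from a bivector `P`. -/
def Br (P : V → Idx → Idx → ℝ) (f g : V → ℝ) (y : V) : ℝ :=
  ∑ a : Idx, ∑ b : Idx, P y a b * pd f y a * pd g y b

open PdCalc in
lemma pd_Br {P : V → Idx → Idx → ℝ} {x : V}
    (hP : ∀ a b, DifferentiableAt ℝ (fun y => P y a b) x)
    {g h : V → ℝ} (hg : ContDiff ℝ (⊤ : ℕ∞) g) (hh : ContDiff ℝ (⊤ : ℕ∞) h) (e : Idx) :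
    pd (Br P g h) x e = ∑ a : Idx, ∑ b : Idx,
      (pd (fun y => P y a b) x e * pd g x a * pd h x b
        + P x a b * (H2 g x e a * pd h x b + pd g x a * H2 h x e b)) := by
  have hterm : ∀ a b : Idx, DifferentiableAt ℝ (fun y => P y a b * pd g y a * pd h y b) x :=
    fun a b => (((hP a b).mul ((diff_pd hg a) x)).mul ((diff_pd hh b) x))
  have h1 : pd (Br P g h) x e
      = ∑ a : Idx, pd (fun y => ∑ b : Idx, P y a b * pd g y a * pd h y b) x e := by
    unfold Br
    exact pd_sum (fun a _ => DifferentiableAt.fun_sum (fun b _ => hterm a b)) e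
  rw [h1]
  refine Finset.sum_congr rfl (fun a _ => ?_)
  rw [pd_sum (fun b _ => hterm a b) e]
  refine Finset.sum_congr rfl (fun b _ => ?_)
  rw [pd_mul ((hP a b).fun_mul ((diff_pd hg a) x)) ((diff_pd hh b) x) e,
    pd_mul (hP a b) ((diff_pd hg a) x) e, pd_pd hg x a e, pd_pd hh x b e]
  ring

end General

section Jacobi

abbrev Q4 : Type := Idx × Idx × Idx × Idx

variable (P : V → Idx → Idx → ℝ) (x : V)

/-- q = (a, b, c, e) -/
def PTA (f g h : V → ℝ) (q : Q4) : ℝ :=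
  P x q.1 q.2.2.2 * pd f x q.1 *
    (pd (fun y => P y q.2.1 q.2.2.1) x q.2.2.2 * pd g x q.2.1 * pd h x q.2.2.1)

def PTB (f g h : V → ℝ) (q : Q4) : ℝ :=
  P x q.1 q.2.2.2 * pd f x q.1 *
    (P x q.2.1 q.2.2.1 * (H2 g x q.2.2.2 q.2.1 * pd h x q.2.2.1))

def PTC (f g h : V → ℝ) (q : Q4) : ℝ :=
  P x q.1 q.2.2.2 * pd f x q.1 *
    (P x q.2.1 q.2.2.1 * (pd g x q.2.1 * H2 h x q.2.2.2 q.2.2.1))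

lemma Br_Br {f g h : V → ℝ} (hP : ∀ a b, DifferentiableAt ℝ (fun y => P y a b) x)
    (hg : ContDiff ℝ (⊤ : ℕ∞) g) (hh : ContDiff ℝ (⊤ : ℕ∞) h) :
    Br P f (Br P g h) x
      = (∑ q : Q4, PTA P x f g h q) + (∑ q : Q4, PTB P x f g h q)
        + (∑ q : Q4, PTC P x f g h q) := by
  have step1 : Br P f (Br P g h) x
      = ∑ a : Idx, ∑ e : Idx, ∑ b : Idx, ∑ c : Idx,
          (PTA P x f g h (a,b,c,e) + PTB P x f g h (a,b,c,e) + PTC P x f g h (a,b,c,e)) := by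
    unfold Br
    refine Finset.sum_congr rfl (fun a _ => ?_)
    refine Finset.sum_congr rfl (fun e _ => ?_)
    rw [show pd (fun y => ∑ a : Idx, ∑ b : Idx, P y a b * pd g y a * pd h y b) x e
        = pd (Br P g h) x e from rfl]
    rw [pd_Br hP hg hh, Finset.mul_sum]
    refine Finset.sum_congr rfl (fun b _ => ?_)
    rw [Finset.mul_sum]
    refine Finset.sum_congr rfl (fun c _ => ?_)
    simp only [PTA, PTB, PTC]
    ring
  rw [step1]
  have swap : ∀ F : Idx → Idx → Idx → Idx → ℝ, (∑ a : Idx, ∑ e : Idx, ∑ b : Idx, ∑ c : Idx,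
      F a b c e) = ∑ a : Idx, ∑ b : Idx, ∑ c : Idx, ∑ e : Idx, F a b c e := by
    intro F
    refine Finset.sum_congr rfl (fun a _ => ?_)
    rw [Finset.sum_comm]
    refine Finset.sum_congr rfl (fun b _ => ?_)
    rw [Finset.sum_comm]
  rw [swap]
  simp only [Fintype.sum_prod_type, ← Finset.sum_add_distrib]

/-- cancellation of second-derivative terms -/
lemma PTC_cancel {u v w : V → ℝ} (hA : ∀ y a b, P y a b = - P y b a)
    (hv : ContDiff ℝ (⊤ : ℕ∞) v) :
    (∑ q : Q4, PTC P x w u v q) = - ∑ q : Q4, PTB P x u v w q := by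
  rw [← Finset.sum_neg_distrib]
  refine Fintype.sum_equiv ⟨fun q => (q.2.1, q.2.2.2, q.1, q.2.2.1),
    fun q => (q.2.2.1, q.1, q.2.2.2, q.2.1), fun q => rfl, fun q => rfl⟩ _ _ ?_
  rintro ⟨a, b, c, e⟩
  simp only [PTB, PTC, Equiv.coe_fn_mk]
  rw [H2_symm hv x c e, hA x e a]
  ring

lemma PTA_reindex1 (f g h : V → ℝ) :
    (∑ q : Q4, PTA P x g h f q)
      = ∑ q : Q4, P x q.2.1 q.2.2.2 * pd g x q.2.1 *
          (pd (fun y => P y q.2.2.1 q.1) x q.2.2.2 * pd h x q.2.2.1 * pd f x q.1) := by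
  refine (Fintype.sum_equiv ⟨fun q => (q.2.1, q.2.2.1, q.1, q.2.2.2),
    fun q => (q.2.2.1, q.1, q.2.1, q.2.2.2), fun q => rfl, fun q => rfl⟩ _ _ ?_).symm
  rintro ⟨a, b, c, e⟩
  simp only [PTA, Equiv.coe_fn_mk]

lemma PTA_reindex2 (f g h : V → ℝ) :
    (∑ q : Q4, PTA P x h f g q)
      = ∑ q : Q4, P x q.2.2.1 q.2.2.2 * pd h x q.2.2.1 *
          (pd (fun y => P y q.1 q.2.1) x q.2.2.2 * pd f x q.1 * pd g x q.2.1) := by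
  refine (Fintype.sum_equiv ⟨fun q => (q.2.2.1, q.1, q.2.1, q.2.2.2),
    fun q => (q.2.1, q.2.2.1, q.1, q.2.2.2), fun q => rfl, fun q => rfl⟩ _ _ ?_).symm
  rintro ⟨a, b, c, e⟩
  simp only [PTA, Equiv.coe_fn_mk]

theorem jacobi_general
    (hP : ∀ a b, DifferentiableAt ℝ (fun y => P y a b) x)
    (hA : ∀ y a b, P y a b = - P y b a)
    (hJ : ∀ a b c : Idx, (∑ e : Idx,
        (P x a e * pd (fun y => P y b c) x e
          + P x b e * pd (fun y => P y c a) x e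
          + P x c e * pd (fun y => P y a b) x e)) = 0)
    (f g h : V → ℝ) (hf : ContDiff ℝ (⊤ : ℕ∞) f) (hg : ContDiff ℝ (⊤ : ℕ∞) g) (hh : ContDiff ℝ (⊤ : ℕ∞) h) :
    Br P f (Br P g h) x + Br P g (Br P h f) x + Br P h (Br P f g) x = 0 := by
  rw [Br_Br P x hP hg hh, Br_Br P x hP hh hf, Br_Br P x hP hf hg]
  have hB1 := PTC_cancel P x (u := g) (v := h) (w := f) hA hh
  have hB2 := PTC_cancel P x (u := h) (v := f) (w := g) hA hf
  have hB3 := PTC_cancel P x (u := f) (v := g) (w := h) hA hg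
  have hTA : (∑ q : Q4, PTA P x f g h q) + (∑ q : Q4, PTA P x g h f q)
      + (∑ q : Q4, PTA P x h f g q) = 0 := by
    rw [PTA_reindex1 P x f g h, PTA_reindex2 P x f g h, ← Finset.sum_add_distrib,
      ← Finset.sum_add_distrib]
    simp only [Fintype.sum_prod_type]
    refine Finset.sum_eq_zero (fun a _ => ?_)
    refine Finset.sum_eq_zero (fun b _ => ?_)
    refine Finset.sum_eq_zero (fun c _ => ?_)
    trans (pd f x a * pd g x b * pd h x c * ∑ e : Idx,
        (P x a e * pd (fun y => P y b c) x e
          + P x b e * pd (fun y => P y c a) x e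
          + P x c e * pd (fun y => P y a b) x e))
    · rw [Finset.mul_sum]
      refine Finset.sum_congr rfl (fun e _ => ?_)
      simp only [PTA]
      ring
    · rw [hJ a b c, mul_zero]
  linarith [hB1, hB2, hB3, hTA]

end Jacobi
/-! ### Concrete derivative formulas -/

section Concrete

open PdCalc

variable (a₁ a₂ a₃ d : ℝ)

/-- diagonal entries -/
def av : Fin 3 → ℝ := ![a₁, a₂, a₃]

def uQ : V → ℝ := fun y => 1 - d * ∑ i : Fin 3, av a₁ a₂ a₃ i * (y (gI i) * y (gI i))

lemma Qexp (y : V) : gPart y ⬝ᵥ (Amat a₁ a₂ a₃).mulVec (gPart y)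
    = ∑ i : Fin 3, av a₁ a₂ a₃ i * (y (gI i) * y (gI i)) := by
  simp only [Amat, dotProduct, Matrix.mulVec_diagonal, gPart, av]
  exact Finset.sum_congr rfl (fun i _ => by ring)

lemma gfun_eq : gfun a₁ a₂ a₃ d = fun y => (uQ a₁ a₂ a₃ d y)⁻¹ := by
  funext y; unfold gfun uQ; rw [Qexp]

lemma MAg_eq : MAg a₁ a₂ a₃ = fun y => ∑ i : Fin 3, av a₁ a₂ a₃ i * (y (mI i) * y (gI i)) := by
  funext y
  simp only [MAg, Amat, dotProduct, Matrix.mulVec_diagonal, gPart, mPart, av]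
  exact Finset.sum_congr rfl (fun i _ => by ring)

lemma dcoord (b : Idx) : Differentiable ℝ (fun y : V => y b) :=
  (ContinuousLinearMap.proj (R := ℝ) (φ := fun _ : Idx => ℝ) b).differentiable

lemma duQ : Differentiable ℝ (uQ a₁ a₂ a₃ d) := by
  unfold uQ
  exact (differentiable_const _).sub ((Differentiable.fun_sum (fun i _ =>
    ((dcoord (gI i)).fun_mul (dcoord (gI i))).const_mul _)).const_mul d)

lemma dMAg : Differentiable ℝ (MAg a₁ a₂ a₃) := by
  rw [MAg_eq]
  exact Differentiable.fun_sum (fun i _ => ((dcoord (mI i)).fun_mul (dcoord (gI i))).const_mul _)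

lemma hu_pos {x : V} (hx : 0 < 1 - d * (gPart x ⬝ᵥ (Amat a₁ a₂ a₃).mulVec (gPart x))) :
    0 < uQ a₁ a₂ a₃ d x := by unfold uQ; rw [← Qexp]; exact hx

lemma hG_pos {x : V} (hx : 0 < 1 - d * (gPart x ⬝ᵥ (Amat a₁ a₂ a₃).mulVec (gPart x))) :
    0 < gfun a₁ a₂ a₃ d x := by rw [gfun_eq]; exact inv_pos.2 (hu_pos a₁ a₂ a₃ d hx)

lemma hS_pos {x : V} (hx : 0 < 1 - d * (gPart x ⬝ᵥ (Amat a₁ a₂ a₃).mulVec (gPart x))) :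
    0 < sg a₁ a₂ a₃ d x := Real.sqrt_pos.2 (hG_pos a₁ a₂ a₃ d hx)

lemma hS_sq {x : V} (hx : 0 < 1 - d * (gPart x ⬝ᵥ (Amat a₁ a₂ a₃).mulVec (gPart x))) :
    sg a₁ a₂ a₃ d x ^ 2 = gfun a₁ a₂ a₃ d x :=
  Real.sq_sqrt (hG_pos a₁ a₂ a₃ d hx).le

lemma dgfun {x : V} (hx : 0 < 1 - d * (gPart x ⬝ᵥ (Amat a₁ a₂ a₃).mulVec (gPart x))) :
    DifferentiableAt ℝ (gfun a₁ a₂ a₃ d) x := by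
  rw [gfun_eq]; exact ((duQ a₁ a₂ a₃ d) x).inv (hu_pos a₁ a₂ a₃ d hx).ne'

lemma dsg {x : V} (hx : 0 < 1 - d * (gPart x ⬝ᵥ (Amat a₁ a₂ a₃).mulVec (gPart x))) :
    DifferentiableAt ℝ (sg a₁ a₂ a₃ d) x := by
  unfold sg
  exact DifferentiableAt.sqrt (dgfun a₁ a₂ a₃ d hx) (hG_pos a₁ a₂ a₃ d hx).ne'

lemma dsum_sq : Differentiable ℝ (fun y : V => ∑ i : Fin 3, av a₁ a₂ a₃ i * (y (gI i) * y (gI i))) :=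
  Differentiable.fun_sum (fun i _ => ((dcoord (gI i)).fun_mul (dcoord (gI i))).const_mul _)

lemma pd_uQ (x : V) (e : Idx) : pd (uQ a₁ a₂ a₃ d) x e
    = -(d * ∑ i : Fin 3, av a₁ a₂ a₃ i *
        ((if gI i = e then 1 else 0) * x (gI i) + x (gI i) * (if gI i = e then 1 else 0))) := by
  unfold uQ
  rw [pd_sub (differentiableAt_const _) (((dsum_sq a₁ a₂ a₃) x).const_mul d),
    pd_const, pd_cmul d ((dsum_sq a₁ a₂ a₃) x),
    pd_sum (fun i _ => ((((dcoord (gI i)).fun_mul (dcoord (gI i))).const_mul _ : Differentiable ℝ _)) x)]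
  rw [zero_sub]; congr 2
  refine Finset.sum_congr rfl (fun i _ => ?_)
  rw [pd_cmul _ (((dcoord (gI i)).fun_mul (dcoord (gI i))) x),
    pd_mul ((dcoord (gI i)) x) ((dcoord (gI i)) x), pd_coord]


lemma pd_gfun_g {x : V} (hx : 0 < 1 - d * (gPart x ⬝ᵥ (Amat a₁ a₂ a₃).mulVec (gPart x)))
    (j : Fin 3) : pd (gfun a₁ a₂ a₃ d) x (gI j)
      = 2 * d * av a₁ a₂ a₃ j * x (gI j) * sg a₁ a₂ a₃ d x ^ 4 := by
  have h1 : pd (gfun a₁ a₂ a₃ d) x (gI j) = pd (fun y => (uQ a₁ a₂ a₃ d y)⁻¹) x (gI j) := by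
    rw [gfun_eq]
  rw [h1, PdCalc.pd_inv ((duQ a₁ a₂ a₃ d) x) (hu_pos a₁ a₂ a₃ d hx).ne', pd_uQ]
  have hinv : (uQ a₁ a₂ a₃ d x)⁻¹ = sg a₁ a₂ a₃ d x ^ 2 := by
    rw [hS_sq a₁ a₂ a₃ d hx, gfun_eq]
  rw [← inv_pow, hinv]
  fin_cases j <;> simp [Fin.sum_univ_three, gI] <;> ring

lemma pd_gfun_m {x : V} (hx : 0 < 1 - d * (gPart x ⬝ᵥ (Amat a₁ a₂ a₃).mulVec (gPart x)))
    (j : Fin 3) : pd (gfun a₁ a₂ a₃ d) x (mI j) = 0 := by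
  have h1 : pd (gfun a₁ a₂ a₃ d) x (mI j) = pd (fun y => (uQ a₁ a₂ a₃ d y)⁻¹) x (mI j) := by
    rw [gfun_eq]
  rw [h1, PdCalc.pd_inv ((duQ a₁ a₂ a₃ d) x) (hu_pos a₁ a₂ a₃ d hx).ne', pd_uQ]
  simp [Fin.sum_univ_three, gI, mI]

lemma pd_sg_g {x : V} (hx : 0 < 1 - d * (gPart x ⬝ᵥ (Amat a₁ a₂ a₃).mulVec (gPart x)))
    (j : Fin 3) : pd (sg a₁ a₂ a₃ d) x (gI j)
      = d * av a₁ a₂ a₃ j * x (gI j) * sg a₁ a₂ a₃ d x ^ 3 := by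
  have h1 : pd (sg a₁ a₂ a₃ d) x (gI j)
      = pd (fun y => Real.sqrt (gfun a₁ a₂ a₃ d y)) x (gI j) := rfl
  rw [h1, PdCalc.pd_sqrt (dgfun a₁ a₂ a₃ d hx) (hG_pos a₁ a₂ a₃ d hx),
    pd_gfun_g a₁ a₂ a₃ d hx j]
  have h2 : Real.sqrt (gfun a₁ a₂ a₃ d x) = sg a₁ a₂ a₃ d x := rfl
  rw [h2]
  field_simp [(hS_pos a₁ a₂ a₃ d hx).ne']

lemma pd_sg_m {x : V} (hx : 0 < 1 - d * (gPart x ⬝ᵥ (Amat a₁ a₂ a₃).mulVec (gPart x)))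
    (j : Fin 3) : pd (sg a₁ a₂ a₃ d) x (mI j) = 0 := by
  have h1 : pd (sg a₁ a₂ a₃ d) x (mI j)
      = pd (fun y => Real.sqrt (gfun a₁ a₂ a₃ d y)) x (mI j) := rfl
  rw [h1, PdCalc.pd_sqrt (dgfun a₁ a₂ a₃ d hx) (hG_pos a₁ a₂ a₃ d hx),
    pd_gfun_m a₁ a₂ a₃ d hx j, mul_zero]

lemma pd_MAg (x : V) (e : Idx) : pd (MAg a₁ a₂ a₃) x e
    = ∑ i : Fin 3, av a₁ a₂ a₃ i *
        ((if mI i = e then 1 else 0) * x (gI i) + x (mI i) * (if gI i = e then 1 else 0)) := by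
  rw [MAg_eq]
  rw [PdCalc.pd_sum (fun i _ =>
    ((((dcoord (mI i)).fun_mul (dcoord (gI i))).const_mul _ : Differentiable ℝ _)) x)]
  refine Finset.sum_congr rfl (fun i _ => ?_)
  rw [PdCalc.pd_cmul _ (((dcoord (mI i)).fun_mul (dcoord (gI i))) x),
    PdCalc.pd_mul ((dcoord (mI i)) x) ((dcoord (gI i)) x), pd_coord, pd_coord]

lemma pd_MAg_g (x : V) (j : Fin 3) :
    pd (MAg a₁ a₂ a₃) x (gI j) = av a₁ a₂ a₃ j * x (mI j) := by
  rw [pd_MAg]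
  fin_cases j <;> simp [Fin.sum_univ_three, gI, mI]

lemma pd_MAg_m (x : V) (j : Fin 3) :
    pd (MAg a₁ a₂ a₃) x (mI j) = av a₁ a₂ a₃ j * x (gI j) := by
  rw [pd_MAg]
  fin_cases j <;> simp [Fin.sum_univ_three, gI, mI]

lemma cGd_comp (k : Fin 3) :
    (fun y => cGd a₁ a₂ a₃ d y k) = fun y => y (gI k) * (sg a₁ a₂ a₃ d y)⁻¹ := by
  funext y; simp [cGd, gPart, div_eq_mul_inv]

lemma cMd_comp (k : Fin 3) :
    (fun y => cMd a₁ a₂ a₃ d y k) = fun y =>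
      y (mI k) * (sg a₁ a₂ a₃ d y)⁻¹
        - d * sg a₁ a₂ a₃ d y * MAg a₁ a₂ a₃ y * y (gI k) := by
  funext y; simp [cMd, mPart, gPart, div_eq_mul_inv]

lemma dcGd {x : V} (hx : 0 < 1 - d * (gPart x ⬝ᵥ (Amat a₁ a₂ a₃).mulVec (gPart x)))
    (k : Fin 3) : DifferentiableAt ℝ (fun y => cGd a₁ a₂ a₃ d y k) x := by
  rw [cGd_comp]
  exact ((dcoord (gI k)) x).mul ((dsg a₁ a₂ a₃ d hx).inv (hS_pos a₁ a₂ a₃ d hx).ne')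

lemma dcMd {x : V} (hx : 0 < 1 - d * (gPart x ⬝ᵥ (Amat a₁ a₂ a₃).mulVec (gPart x)))
    (k : Fin 3) : DifferentiableAt ℝ (fun y => cMd a₁ a₂ a₃ d y k) x := by
  rw [cMd_comp]
  exact (((dcoord (mI k)) x).mul ((dsg a₁ a₂ a₃ d hx).inv (hS_pos a₁ a₂ a₃ d hx).ne')).sub
    ((((differentiableAt_const d).mul (dsg a₁ a₂ a₃ d hx)).mul ((dMAg a₁ a₂ a₃) x)).mul
      ((dcoord (gI k)) x))

lemma pd_cGd_g {x : V} (hx : 0 < 1 - d * (gPart x ⬝ᵥ (Amat a₁ a₂ a₃).mulVec (gPart x)))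
    (k j : Fin 3) : pd (fun y => cGd a₁ a₂ a₃ d y k) x (gI j)
      = (if k = j then 1 else 0) * (sg a₁ a₂ a₃ d x)⁻¹
        - d * av a₁ a₂ a₃ j * x (gI j) * x (gI k) * sg a₁ a₂ a₃ d x := by
  rw [cGd_comp,
    PdCalc.pd_mul ((dcoord (gI k)) x) ((dsg a₁ a₂ a₃ d hx).fun_inv (hS_pos a₁ a₂ a₃ d hx).ne'),
    pd_coord, PdCalc.pd_inv (dsg a₁ a₂ a₃ d hx) (hS_pos a₁ a₂ a₃ d hx).ne',
    pd_sg_g a₁ a₂ a₃ d hx j]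
  have : (if (gI k : Idx) = gI j then (1:ℝ) else 0) = if k = j then 1 else 0 := by
    simp [gI]
  rw [this]
  generalize (if k = j then (1:ℝ) else 0) = δ
  field_simp [(hS_pos a₁ a₂ a₃ d hx).ne']
  ring

lemma pd_cGd_m {x : V} (hx : 0 < 1 - d * (gPart x ⬝ᵥ (Amat a₁ a₂ a₃).mulVec (gPart x)))
    (k j : Fin 3) : pd (fun y => cGd a₁ a₂ a₃ d y k) x (mI j) = 0 := by
  rw [cGd_comp,
    PdCalc.pd_mul ((dcoord (gI k)) x) ((dsg a₁ a₂ a₃ d hx).fun_inv (hS_pos a₁ a₂ a₃ d hx).ne'),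
    pd_coord, PdCalc.pd_inv (dsg a₁ a₂ a₃ d hx) (hS_pos a₁ a₂ a₃ d hx).ne',
    pd_sg_m a₁ a₂ a₃ d hx j]
  simp [gI, mI]

lemma pd_cMd_m {x : V} (hx : 0 < 1 - d * (gPart x ⬝ᵥ (Amat a₁ a₂ a₃).mulVec (gPart x)))
    (k j : Fin 3) : pd (fun y => cMd a₁ a₂ a₃ d y k) x (mI j)
      = (if k = j then 1 else 0) * (sg a₁ a₂ a₃ d x)⁻¹
        - d * sg a₁ a₂ a₃ d x * (av a₁ a₂ a₃ j * x (gI j)) * x (gI k) := by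
  have hS := (hS_pos a₁ a₂ a₃ d hx).ne'
  rw [cMd_comp,
    PdCalc.pd_sub (((dcoord (mI k)) x).fun_mul ((dsg a₁ a₂ a₃ d hx).fun_inv hS))
      ((((differentiableAt_const d).fun_mul (dsg a₁ a₂ a₃ d hx)).fun_mul ((dMAg a₁ a₂ a₃) x)).fun_mul
        ((dcoord (gI k)) x)),
    PdCalc.pd_mul ((dcoord (mI k)) x) ((dsg a₁ a₂ a₃ d hx).fun_inv hS),
    pd_coord, PdCalc.pd_inv (dsg a₁ a₂ a₃ d hx) hS,
    PdCalc.pd_mul (((differentiableAt_const d).fun_mul (dsg a₁ a₂ a₃ d hx)).fun_mul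
      ((dMAg a₁ a₂ a₃) x)) ((dcoord (gI k)) x),
    PdCalc.pd_mul (((differentiableAt_const d).fun_mul (dsg a₁ a₂ a₃ d hx))) ((dMAg a₁ a₂ a₃) x),
    PdCalc.pd_mul (differentiableAt_const d) (dsg a₁ a₂ a₃ d hx),
    pd_coord, PdCalc.pd_const, pd_sg_m a₁ a₂ a₃ d hx j, pd_MAg_m a₁ a₂ a₃ x j]
  have h1 : (if (mI k : Idx) = mI j then (1:ℝ) else 0) = if k = j then 1 else 0 := by
    simp [mI]
  have h2 : (if (gI k : Idx) = mI j then (1:ℝ) else 0) = 0 := by simp [gI, mI]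
  rw [h1, h2]
  ring

lemma pd_cMd_g {x : V} (hx : 0 < 1 - d * (gPart x ⬝ᵥ (Amat a₁ a₂ a₃).mulVec (gPart x)))
    (k j : Fin 3) : pd (fun y => cMd a₁ a₂ a₃ d y k) x (gI j)
      = -(d * av a₁ a₂ a₃ j * x (gI j) * x (mI k) * sg a₁ a₂ a₃ d x)
        - (d * d * av a₁ a₂ a₃ j * x (gI j) * sg a₁ a₂ a₃ d x ^ 3 * MAg a₁ a₂ a₃ x * x (gI k)
          + d * sg a₁ a₂ a₃ d x * (av a₁ a₂ a₃ j * x (mI j)) * x (gI k)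
          + d * sg a₁ a₂ a₃ d x * MAg a₁ a₂ a₃ x * (if k = j then 1 else 0)) := by
  have hS := (hS_pos a₁ a₂ a₃ d hx).ne'
  rw [cMd_comp,
    PdCalc.pd_sub (((dcoord (mI k)) x).fun_mul ((dsg a₁ a₂ a₃ d hx).fun_inv hS))
      ((((differentiableAt_const d).fun_mul (dsg a₁ a₂ a₃ d hx)).fun_mul ((dMAg a₁ a₂ a₃) x)).fun_mul
        ((dcoord (gI k)) x)),
    PdCalc.pd_mul ((dcoord (mI k)) x) ((dsg a₁ a₂ a₃ d hx).fun_inv hS),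
    pd_coord, PdCalc.pd_inv (dsg a₁ a₂ a₃ d hx) hS,
    PdCalc.pd_mul (((differentiableAt_const d).fun_mul (dsg a₁ a₂ a₃ d hx)).fun_mul
      ((dMAg a₁ a₂ a₃) x)) ((dcoord (gI k)) x),
    PdCalc.pd_mul (((differentiableAt_const d).fun_mul (dsg a₁ a₂ a₃ d hx))) ((dMAg a₁ a₂ a₃) x),
    PdCalc.pd_mul (differentiableAt_const d) (dsg a₁ a₂ a₃ d hx),
    pd_coord, PdCalc.pd_const, pd_sg_g a₁ a₂ a₃ d hx j, pd_MAg_g a₁ a₂ a₃ x j]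
  have h1 : (if (mI k : Idx) = gI j then (1:ℝ) else 0) = 0 := by simp [gI, mI]
  have h2 : (if (gI k : Idx) = gI j then (1:ℝ) else 0) = if k = j then 1 else 0 := by
    simp [gI]
  rw [h1, h2]
  generalize (if k = j then (1:ℝ) else 0) = δ
  field_simp [(hS_pos a₁ a₂ a₃ d hx).ne']
  ring

end Concrete

section Assemble

variable (a₁ a₂ a₃ d : ℝ)

def Pd3 (y : V) : Idx → Idx → ℝ := fun a b =>
  match a, b with
  | Sum.inl _, Sum.inl _ => 0
  | Sum.inl i, Sum.inr j => ∑ k : Fin 3, eps i j k * cGd a₁ a₂ a₃ d y k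
  | Sum.inr i, Sum.inl j => ∑ k : Fin 3, eps i j k * cGd a₁ a₂ a₃ d y k
  | Sum.inr i, Sum.inr j => ∑ k : Fin 3, eps i j k * cMd a₁ a₂ a₃ d y k

lemma inl_eq_gI (i : Fin 3) : (Sum.inl i : Idx) = gI i := rfl
lemma inr_eq_mI (i : Fin 3) : (Sum.inr i : Idx) = mI i := rfl

lemma Pd3_ll (y : V) (i j : Fin 3) : Pd3 a₁ a₂ a₃ d y (gI i) (gI j) = 0 := rfl
lemma Pd3_lr (y : V) (i j : Fin 3) : Pd3 a₁ a₂ a₃ d y (gI i) (mI j)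
    = ∑ k : Fin 3, eps i j k * cGd a₁ a₂ a₃ d y k := rfl
lemma Pd3_rl (y : V) (i j : Fin 3) : Pd3 a₁ a₂ a₃ d y (mI i) (gI j)
    = ∑ k : Fin 3, eps i j k * cGd a₁ a₂ a₃ d y k := rfl
lemma Pd3_rr (y : V) (i j : Fin 3) : Pd3 a₁ a₂ a₃ d y (mI i) (mI j)
    = ∑ k : Fin 3, eps i j k * cMd a₁ a₂ a₃ d y k := rfl

lemma eps_antisym (i j k : Fin 3) : eps i j k = -eps j i k := by
  simp only [eps]; ring

lemma Pd3_antisym (y : V) (a b : Idx) : Pd3 a₁ a₂ a₃ d y a b = - Pd3 a₁ a₂ a₃ d y b a := by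
  rcases a with i | i <;> rcases b with j | j <;>
    simp only [inl_eq_gI, inr_eq_mI, Pd3_ll, Pd3_lr, Pd3_rl, Pd3_rr, neg_zero] <;>
  try (rw [← Finset.sum_neg_distrib];
       exact Finset.sum_congr rfl fun k _ => by rw [eps_antisym i j k]; ring)

set_option maxHeartbeats 2000000 in
lemma bracket_eq_Br : bracket (cMd a₁ a₂ a₃ d) (cGd a₁ a₂ a₃ d) = Br (Pd3 a₁ a₂ a₃ d) := by
  funext f g y
  unfold bracket Br
  simp only [Fintype.sum_sum_type, inl_eq_gI, inr_eq_mI, Pd3_ll, Pd3_lr, Pd3_rl, Pd3_rr,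
    Fin.sum_univ_three]
  ring

variable {x : V}

lemma dPd3 (hx : 0 < 1 - d * (gPart x ⬝ᵥ (Amat a₁ a₂ a₃).mulVec (gPart x))) (a b : Idx) : DifferentiableAt ℝ (fun y => Pd3 a₁ a₂ a₃ d y a b) x := by
  rcases a with i | i <;> rcases b with j | j <;>
    simp only [inl_eq_gI, inr_eq_mI, Pd3_ll, Pd3_lr, Pd3_rl, Pd3_rr]
  · exact differentiableAt_const 0
  · exact DifferentiableAt.fun_sum fun k _ => (dcGd a₁ a₂ a₃ d hx k).const_mul _
  · exact DifferentiableAt.fun_sum fun k _ => (dcGd a₁ a₂ a₃ d hx k).const_mul _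
  · exact DifferentiableAt.fun_sum fun k _ => (dcMd a₁ a₂ a₃ d hx k).const_mul _

lemma pd_sum_cGd (hx : 0 < 1 - d * (gPart x ⬝ᵥ (Amat a₁ a₂ a₃).mulVec (gPart x)))
    (i j : Fin 3) (e : Idx) :
    pd (fun y => ∑ k : Fin 3, eps i j k * cGd a₁ a₂ a₃ d y k) x e
      = ∑ k : Fin 3, eps i j k * pd (fun y => cGd a₁ a₂ a₃ d y k) x e := by
  rw [PdCalc.pd_sum (fun k _ => (dcGd a₁ a₂ a₃ d hx k).const_mul _)]
  exact Finset.sum_congr rfl fun k _ => PdCalc.pd_cmul _ (dcGd a₁ a₂ a₃ d hx k) e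

lemma pd_sum_cMd (hx : 0 < 1 - d * (gPart x ⬝ᵥ (Amat a₁ a₂ a₃).mulVec (gPart x)))
    (i j : Fin 3) (e : Idx) :
    pd (fun y => ∑ k : Fin 3, eps i j k * cMd a₁ a₂ a₃ d y k) x e
      = ∑ k : Fin 3, eps i j k * pd (fun y => cMd a₁ a₂ a₃ d y k) x e := by
  rw [PdCalc.pd_sum (fun k _ => (dcMd a₁ a₂ a₃ d hx k).const_mul _)]
  exact Finset.sum_congr rfl fun k _ => PdCalc.pd_cmul _ (dcMd a₁ a₂ a₃ d hx k) e

end Assemble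

section MainJ

variable (a₁ a₂ a₃ d : ℝ)

/-- The Jacobi structure-function combination. -/
def Jsum (x : V) (a b c : Idx) : ℝ := ∑ e : Idx,
  (Pd3 a₁ a₂ a₃ d x a e * pd (fun y => Pd3 a₁ a₂ a₃ d y b c) x e
    + Pd3 a₁ a₂ a₃ d x b e * pd (fun y => Pd3 a₁ a₂ a₃ d y c a) x e
    + Pd3 a₁ a₂ a₃ d x c e * pd (fun y => Pd3 a₁ a₂ a₃ d y a b) x e)

lemma Jsum_cyc (x : V) (a b c : Idx) : Jsum a₁ a₂ a₃ d x a b c = Jsum a₁ a₂ a₃ d x b c a :=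
  Finset.sum_congr rfl fun e _ => by ring

variable {x : V}

set_option maxHeartbeats 1000000 in
lemma Jsum_lll (hx : 0 < 1 - d * (gPart x ⬝ᵥ (Amat a₁ a₂ a₃).mulVec (gPart x)))
    (i j k : Fin 3) : Jsum a₁ a₂ a₃ d x (gI i) (gI j) (gI k) = 0 := by
  have hS := (hS_pos a₁ a₂ a₃ d hx).ne'
  unfold Jsum
  simp only [Fintype.sum_sum_type, inl_eq_gI, inr_eq_mI, Pd3_ll, Pd3_lr, Pd3_rl, Pd3_rr]
  try simp only [PdCalc.pd_const, pd_sum_cGd a₁ a₂ a₃ d hx, pd_sum_cMd a₁ a₂ a₃ d hx]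
  try simp only [pd_cGd_g a₁ a₂ a₃ d hx, pd_cGd_m a₁ a₂ a₃ d hx,
    pd_cMd_g a₁ a₂ a₃ d hx, pd_cMd_m a₁ a₂ a₃ d hx]
  try simp only [cGd, cMd, gPart, mPart]
  try simp only [Fin.sum_univ_three]
  fin_cases i <;> fin_cases j <;> fin_cases k <;>
    norm_num [eps, av] <;> (try simp only [Fin.reduceEq, reduceIte]) <;>
    (try field_simp [hS]) <;> ring

set_option maxHeartbeats 2000000 in
lemma Jsum_llr (hx : 0 < 1 - d * (gPart x ⬝ᵥ (Amat a₁ a₂ a₃).mulVec (gPart x)))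
    (i j k : Fin 3) : Jsum a₁ a₂ a₃ d x (gI i) (gI j) (mI k) = 0 := by
  have hS := (hS_pos a₁ a₂ a₃ d hx).ne'
  unfold Jsum
  simp only [Fintype.sum_sum_type, inl_eq_gI, inr_eq_mI, Pd3_ll, Pd3_lr, Pd3_rl, Pd3_rr]
  try simp only [PdCalc.pd_const, pd_sum_cGd a₁ a₂ a₃ d hx, pd_sum_cMd a₁ a₂ a₃ d hx]
  try simp only [pd_cGd_g a₁ a₂ a₃ d hx, pd_cGd_m a₁ a₂ a₃ d hx,
    pd_cMd_g a₁ a₂ a₃ d hx, pd_cMd_m a₁ a₂ a₃ d hx]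
  try simp only [cGd, cMd, gPart, mPart]
  try simp only [Fin.sum_univ_three]
  fin_cases i <;> fin_cases j <;> fin_cases k <;>
    norm_num [eps, av] <;> (try simp only [Fin.reduceEq, reduceIte]) <;>
    (try field_simp [hS]) <;> ring

set_option maxHeartbeats 3000000 in
lemma Jsum_lrr (hx : 0 < 1 - d * (gPart x ⬝ᵥ (Amat a₁ a₂ a₃).mulVec (gPart x)))
    (i j k : Fin 3) : Jsum a₁ a₂ a₃ d x (gI i) (mI j) (mI k) = 0 := by
  have hS := (hS_pos a₁ a₂ a₃ d hx).ne'
  unfold Jsum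
  simp only [Fintype.sum_sum_type, inl_eq_gI, inr_eq_mI, Pd3_ll, Pd3_lr, Pd3_rl, Pd3_rr]
  try simp only [PdCalc.pd_const, pd_sum_cGd a₁ a₂ a₃ d hx, pd_sum_cMd a₁ a₂ a₃ d hx]
  try simp only [pd_cGd_g a₁ a₂ a₃ d hx, pd_cGd_m a₁ a₂ a₃ d hx,
    pd_cMd_g a₁ a₂ a₃ d hx, pd_cMd_m a₁ a₂ a₃ d hx]
  try simp only [cGd, cMd, gPart, mPart]
  try simp only [Fin.sum_univ_three]
  fin_cases i <;> fin_cases j <;> fin_cases k <;>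
    norm_num [eps, av] <;> (try simp only [Fin.reduceEq, reduceIte]) <;>
    (try field_simp [hS]) <;> ring

set_option maxHeartbeats 3000000 in
lemma Jsum_rrr (hx : 0 < 1 - d * (gPart x ⬝ᵥ (Amat a₁ a₂ a₃).mulVec (gPart x)))
    (i j k : Fin 3) : Jsum a₁ a₂ a₃ d x (mI i) (mI j) (mI k) = 0 := by
  have hS := (hS_pos a₁ a₂ a₃ d hx).ne'
  unfold Jsum
  simp only [Fintype.sum_sum_type, inl_eq_gI, inr_eq_mI, Pd3_ll, Pd3_lr, Pd3_rl, Pd3_rr]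
  try simp only [PdCalc.pd_const, pd_sum_cGd a₁ a₂ a₃ d hx, pd_sum_cMd a₁ a₂ a₃ d hx]
  try simp only [pd_cGd_g a₁ a₂ a₃ d hx, pd_cGd_m a₁ a₂ a₃ d hx,
    pd_cMd_g a₁ a₂ a₃ d hx, pd_cMd_m a₁ a₂ a₃ d hx]
  try simp only [cGd, cMd, gPart, mPart]
  try simp only [Fin.sum_univ_three]
  fin_cases i <;> fin_cases j <;> fin_cases k <;>
    norm_num [eps, av] <;> (try simp only [Fin.reduceEq, reduceIte]) <;>
    (try field_simp [hS]) <;> ring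

lemma hJ_main (hx : 0 < 1 - d * (gPart x ⬝ᵥ (Amat a₁ a₂ a₃).mulVec (gPart x)))
    (a b c : Idx) : (∑ e : Idx,
      (Pd3 a₁ a₂ a₃ d x a e * pd (fun y => Pd3 a₁ a₂ a₃ d y b c) x e
        + Pd3 a₁ a₂ a₃ d x b e * pd (fun y => Pd3 a₁ a₂ a₃ d y c a) x e
        + Pd3 a₁ a₂ a₃ d x c e * pd (fun y => Pd3 a₁ a₂ a₃ d y a b) x e)) = 0 := by
  show Jsum a₁ a₂ a₃ d x a b c = 0
  rcases a with i | i <;> rcases b with j | j <;> rcases c with k | k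
  · exact Jsum_lll a₁ a₂ a₃ d hx i j k
  · exact Jsum_llr a₁ a₂ a₃ d hx i j k
  · rw [Jsum_cyc, Jsum_cyc]; exact Jsum_llr a₁ a₂ a₃ d hx k i j
  · exact Jsum_lrr a₁ a₂ a₃ d hx i j k
  · rw [Jsum_cyc]; exact Jsum_llr a₁ a₂ a₃ d hx j k i
  · rw [Jsum_cyc]; exact Jsum_lrr a₁ a₂ a₃ d hx j k i
  · rw [Jsum_cyc, Jsum_cyc]; exact Jsum_lrr a₁ a₂ a₃ d hx k i j
  · exact Jsum_rrr a₁ a₂ a₃ d hx i j k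

end MainJ


/-- The deformed (nonholonomic Chaplygin) bracket satisfies the Jacobi
identity on the open set where g(γ) > 0. -/
theorem deformed_bracket_jacobi (a₁ a₂ a₃ d : ℝ) (f g h : V → ℝ)
    (hf : ContDiff ℝ (⊤ : ℕ∞) f) (hg : ContDiff ℝ (⊤ : ℕ∞) g) (hh : ContDiff ℝ (⊤ : ℕ∞) h) (x : V)
    (hx : 0 < 1 - d * (gPart x ⬝ᵥ (Amat a₁ a₂ a₃).mulVec (gPart x))) :
    bracket (cMd a₁ a₂ a₃ d) (cGd a₁ a₂ a₃ d) f
        (bracket (cMd a₁ a₂ a₃ d) (cGd a₁ a₂ a₃ d) g h) x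
      + bracket (cMd a₁ a₂ a₃ d) (cGd a₁ a₂ a₃ d) g
        (bracket (cMd a₁ a₂ a₃ d) (cGd a₁ a₂ a₃ d) h f) x
      + bracket (cMd a₁ a₂ a₃ d) (cGd a₁ a₂ a₃ d) h
        (bracket (cMd a₁ a₂ a₃ d) (cGd a₁ a₂ a₃ d) f g) x = 0 := by
  rw [bracket_eq_Br a₁ a₂ a₃ d]
  exact jacobi_general (Pd3 a₁ a₂ a₃ d) x (fun a b => dPd3 a₁ a₂ a₃ d hx a b)
    (Pd3_antisym a₁ a₂ a₃ d) (hJ_main a₁ a₂ a₃ d hx) f g h hf hg hh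
end
end

section
/- The functions C₁ = ⟨γ, γ⟩ and C₂ = ⟨γ, M⟩ are Casimir functions of the deformed (nonholonomic Chaplygin) Poisson bracket {·,·}_d. -/
open Matrix Filter

noncomputable section

lemma hasFDerivAt_coord (b : Idx) (x : V) :
    HasFDerivAt (fun y : V => y b) (ContinuousLinearMap.proj b : V →L[ℝ] ℝ) x := by
  exact (ContinuousLinearMap.proj b (R := ℝ) (φ := fun _ : Idx => ℝ)).hasFDerivAt

lemma pd_coord (b : Idx) (x : V) (a : Idx) :
    pd (fun y => y b) x a = if b = a then 1 else 0 := by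
  rw [pd, (hasFDerivAt_coord b x).fderiv]
  simp [Pi.single_apply]

lemma pd_dot (b c : Fin 3 → Idx) (x : V) (a : Idx) :
    pd (fun y => ∑ i : Fin 3, y (b i) * y (c i)) x a
      = ∑ i : Fin 3, (x (b i) * (if c i = a then 1 else 0)
          + x (c i) * (if b i = a then 1 else 0)) := by
  have h := HasFDerivAt.fun_sum (fun i (_ : i ∈ Finset.univ) =>
    (hasFDerivAt_coord (b i) x).fun_mul (hasFDerivAt_coord (c i) x))
  rw [pd, h.fderiv]
  simp [Pi.single_apply]

/-- C₁ = ⟨γ,γ⟩ and C₂ = ⟨γ,M⟩ are Casimir functions of the deformed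
(nonholonomic Chaplygin) bracket. -/
theorem deformed_bracket_casimirs (a₁ a₂ a₃ d : ℝ) (a : Idx) (x : V)
    (hx : 0 < 1 - d * (gPart x ⬝ᵥ (Amat a₁ a₂ a₃).mulVec (gPart x))) :
    bracket (cMd a₁ a₂ a₃ d) (cGd a₁ a₂ a₃ d)
      (fun y => gPart y ⬝ᵥ gPart y) (fun y => y a) x = 0 ∧
    bracket (cMd a₁ a₂ a₃ d) (cGd a₁ a₂ a₃ d)
      (fun y => gPart y ⬝ᵥ mPart y) (fun y => y a) x = 0 := by
  have hf1 : (fun y : V => gPart y ⬝ᵥ gPart y)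
      = fun y => ∑ i : Fin 3, y (gI i) * y (gI i) := by
    funext y; simp [dotProduct, gPart]
  have hf2 : (fun y : V => gPart y ⬝ᵥ mPart y)
      = fun y => ∑ i : Fin 3, y (gI i) * y (mI i) := by
    funext y; simp [dotProduct, gPart, mPart]
  constructor <;> [rw [hf1]; rw [hf2]] <;>
    unfold bracket <;>
    simp only [pd_dot, pd_coord] <;>
    rcases a with j | j <;> fin_cases j <;>
    simp [Fin.sum_univ_three, eps, cMd, cGd, gI, mI, mPart, gPart] <;>
    ring
end
end

section
/- With respect to the deformed bracket {·,·}_d, the integrals H₁ = ⟨M, A_d M⟩ and H₂ = ⟨M, M⟩ are in involution: {H₁, H₂}_d = 0. -/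
open Matrix Filter

noncomputable section

set_option maxHeartbeats 1600000

def pr (a : Idx) : V →L[ℝ] ℝ := ContinuousLinearMap.proj a
lemma hasF (a : Idx) (x : V) : HasFDerivAt (fun y : V => y a) (pr a) x :=
  (pr a).hasFDerivAt

lemma pr_single (a b : Idx) : pr a (Pi.single b 1) = if a = b then 1 else 0 := by
  simp [pr, Pi.single_apply]

lemma H1_eq (a₁ a₂ a₃ d : ℝ) : (fun y : V => mPart y ⬝ᵥ (Adm a₁ a₂ a₃ d y).mulVec (mPart y))
    = fun y : V =>
      (a₁ * (y (mI 0) * y (mI 0)) + (a₂ * (y (mI 1) * y (mI 1)) + a₃ * (y (mI 2) * y (mI 2))))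
      + d * ((a₁ * (y (mI 0) * y (gI 0)) + (a₂ * (y (mI 1) * y (gI 1)) + a₃ * (y (mI 2) * y (gI 2))))
           * (a₁ * (y (mI 0) * y (gI 0)) + (a₂ * (y (mI 1) * y (gI 1)) + a₃ * (y (mI 2) * y (gI 2)))))
        * (1 - d * (a₁ * (y (gI 0) * y (gI 0)) + (a₂ * (y (gI 1) * y (gI 1)) + a₃ * (y (gI 2) * y (gI 2)))))⁻¹ := by
  funext y
  simp [Adm, Amat, gfun, mPart, gPart, dotProduct, mulVec, vecMulVec_apply, Fin.sum_univ_three,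
    Matrix.add_apply, Matrix.smul_apply, Matrix.diagonal_apply, smul_eq_mul]
  ring

lemma quad_eq (a₁ a₂ a₃ : ℝ) (x : V) :
    gPart x ⬝ᵥ (Amat a₁ a₂ a₃).mulVec (gPart x)
      = a₁ * (x (gI 0) * x (gI 0)) + (a₂ * (x (gI 1) * x (gI 1)) + a₃ * (x (gI 2) * x (gI 2))) := by
  simp [Amat, gPart, dotProduct, mulVec, Fin.sum_univ_three, Matrix.diagonal_apply]
  ring

lemma MAg_eq_s11 (a₁ a₂ a₃ : ℝ) (x : V) :
    MAg a₁ a₂ a₃ x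
      = a₁ * (x (mI 0) * x (gI 0)) + (a₂ * (x (mI 1) * x (gI 1)) + a₃ * (x (mI 2) * x (gI 2))) := by
  simp [MAg, Amat, gPart, mPart, dotProduct, mulVec, Fin.sum_univ_three, Matrix.diagonal_apply]
  ring

lemma H2_eq : (fun y : V => mPart y ⬝ᵥ mPart y)
    = fun y : V => y (mI 0) * y (mI 0) + (y (mI 1) * y (mI 1) + y (mI 2) * y (mI 2)) := by
  funext y
  simp [mPart, dotProduct, Fin.sum_univ_three]
  ring

lemma pd_H2_m (x : V) (j : Fin 3) :
    pd (fun y : V => mPart y ⬝ᵥ mPart y) x (mI j) = 2 * mPart x j := by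
  rw [H2_eq]
  have hF := ((hasF (mI 0) x).mul (hasF (mI 0) x)).add
    (((hasF (mI 1) x).mul (hasF (mI 1) x)).add ((hasF (mI 2) x).mul (hasF (mI 2) x)))
  rw [pd]; erw [hF.fderiv]
  fin_cases j <;>
    simp [pr, mPart, mI, Pi.single_apply] <;> ring

lemma pd_H2_g (x : V) (j : Fin 3) :
    pd (fun y : V => mPart y ⬝ᵥ mPart y) x (gI j) = 0 := by
  rw [H2_eq]
  have hF := ((hasF (mI 0) x).mul (hasF (mI 0) x)).add
    (((hasF (mI 1) x).mul (hasF (mI 1) x)).add ((hasF (mI 2) x).mul (hasF (mI 2) x)))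
  rw [pd]; erw [hF.fderiv]
  fin_cases j <;> simp [pr, mI, gI, Pi.single_apply]

lemma pd_H1_m0 (a₁ a₂ a₃ d : ℝ) (x : V)
    (hx : 0 < 1 - d * (gPart x ⬝ᵥ (Amat a₁ a₂ a₃).mulVec (gPart x))) :
    pd (fun y : V => mPart y ⬝ᵥ (Adm a₁ a₂ a₃ d y).mulVec (mPart y)) x (mI 0)
      = 2 * a₁ * (mPart x 0 + d * gfun a₁ a₂ a₃ d x * MAg a₁ a₂ a₃ x * gPart x 0) := by
  rw [H1_eq]
  have hQ0 : (1 - d * (a₁ * (x (gI 0) * x (gI 0)) + (a₂ * (x (gI 1) * x (gI 1)) + a₃ * (x (gI 2) * x (gI 2))))) ≠ 0 := by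
    rw [← quad_eq a₁ a₂ a₃ x]; exact ne_of_gt hx
  have hR := (((hasF (mI 0) x).mul (hasF (mI 0) x)).const_mul a₁).add
    ((((hasF (mI 1) x).mul (hasF (mI 1) x)).const_mul a₂).add
      (((hasF (mI 2) x).mul (hasF (mI 2) x)).const_mul a₃))
  have hP := (((hasF (mI 0) x).mul (hasF (gI 0) x)).const_mul a₁).add
    ((((hasF (mI 1) x).mul (hasF (gI 1) x)).const_mul a₂).add
      (((hasF (mI 2) x).mul (hasF (gI 2) x)).const_mul a₃))
  have hQ := ((((hasF (gI 0) x).mul (hasF (gI 0) x)).const_mul a₁).add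
    ((((hasF (gI 1) x).mul (hasF (gI 1) x)).const_mul a₂).add
      (((hasF (gI 2) x).mul (hasF (gI 2) x)).const_mul a₃))).const_mul d |>.const_sub 1
  have hQinv : HasFDerivAt (fun y : V => (1 - d * (a₁ * (y (gI 0) * y (gI 0)) + (a₂ * (y (gI 1) * y (gI 1)) + a₃ * (y (gI 2) * y (gI 2)))))⁻¹) _ x :=
    (hasDerivAt_inv hQ0).comp_hasFDerivAt x hQ
  have hF := hR.add (((hP.mul hP).const_mul d).mul hQinv)
  rw [pd]; erw [hF.fderiv]
  simp only [ContinuousLinearMap.add_apply, ContinuousLinearMap.smul_apply,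
    ContinuousLinearMap.neg_apply, smul_eq_mul, pr_single, mI, gI,
    Sum.inr.injEq, Sum.inl.injEq, reduceCtorEq, Fin.reduceEq, reduceIte,
    if_true, if_false, ite_true, ite_false, mul_zero, zero_mul, add_zero, zero_add, mul_one,
    neg_zero, neg_neg]
  rw [gfun, quad_eq, MAg_eq_s11]
  simp only [mPart, gPart, mI, gI, pow_two, mul_inv, Pi.add_apply, Pi.mul_apply]
  ring

lemma pd_H1_g0 (a₁ a₂ a₃ d : ℝ) (x : V)
    (hx : 0 < 1 - d * (gPart x ⬝ᵥ (Amat a₁ a₂ a₃).mulVec (gPart x))) :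
    pd (fun y : V => mPart y ⬝ᵥ (Adm a₁ a₂ a₃ d y).mulVec (mPart y)) x (gI 0)
      = 2 * d * gfun a₁ a₂ a₃ d x * MAg a₁ a₂ a₃ x * a₁ * (mPart x 0 + d * gfun a₁ a₂ a₃ d x * MAg a₁ a₂ a₃ x * gPart x 0) := by
  rw [H1_eq]
  have hQ0 : (1 - d * (a₁ * (x (gI 0) * x (gI 0)) + (a₂ * (x (gI 1) * x (gI 1)) + a₃ * (x (gI 2) * x (gI 2))))) ≠ 0 := by
    rw [← quad_eq a₁ a₂ a₃ x]; exact ne_of_gt hx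
  have hR := (((hasF (mI 0) x).mul (hasF (mI 0) x)).const_mul a₁).add
    ((((hasF (mI 1) x).mul (hasF (mI 1) x)).const_mul a₂).add
      (((hasF (mI 2) x).mul (hasF (mI 2) x)).const_mul a₃))
  have hP := (((hasF (mI 0) x).mul (hasF (gI 0) x)).const_mul a₁).add
    ((((hasF (mI 1) x).mul (hasF (gI 1) x)).const_mul a₂).add
      (((hasF (mI 2) x).mul (hasF (gI 2) x)).const_mul a₃))
  have hQ := ((((hasF (gI 0) x).mul (hasF (gI 0) x)).const_mul a₁).add
    ((((hasF (gI 1) x).mul (hasF (gI 1) x)).const_mul a₂).add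
      (((hasF (gI 2) x).mul (hasF (gI 2) x)).const_mul a₃))).const_mul d |>.const_sub 1
  have hQinv : HasFDerivAt (fun y : V => (1 - d * (a₁ * (y (gI 0) * y (gI 0)) + (a₂ * (y (gI 1) * y (gI 1)) + a₃ * (y (gI 2) * y (gI 2)))))⁻¹) _ x :=
    (hasDerivAt_inv hQ0).comp_hasFDerivAt x hQ
  have hF := hR.add (((hP.mul hP).const_mul d).mul hQinv)
  rw [pd]; erw [hF.fderiv]
  simp only [ContinuousLinearMap.add_apply, ContinuousLinearMap.smul_apply,
    ContinuousLinearMap.neg_apply, smul_eq_mul, pr_single, mI, gI,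
    Sum.inr.injEq, Sum.inl.injEq, reduceCtorEq, Fin.reduceEq, reduceIte,
    if_true, if_false, ite_true, ite_false, mul_zero, zero_mul, add_zero, zero_add, mul_one,
    neg_zero, neg_neg]
  rw [gfun, quad_eq, MAg_eq_s11]
  simp only [mPart, gPart, mI, gI, pow_two, mul_inv, Pi.add_apply, Pi.mul_apply]
  ring

lemma pd_H1_m1 (a₁ a₂ a₃ d : ℝ) (x : V)
    (hx : 0 < 1 - d * (gPart x ⬝ᵥ (Amat a₁ a₂ a₃).mulVec (gPart x))) :
    pd (fun y : V => mPart y ⬝ᵥ (Adm a₁ a₂ a₃ d y).mulVec (mPart y)) x (mI 1)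
      = 2 * a₂ * (mPart x 1 + d * gfun a₁ a₂ a₃ d x * MAg a₁ a₂ a₃ x * gPart x 1) := by
  rw [H1_eq]
  have hQ0 : (1 - d * (a₁ * (x (gI 0) * x (gI 0)) + (a₂ * (x (gI 1) * x (gI 1)) + a₃ * (x (gI 2) * x (gI 2))))) ≠ 0 := by
    rw [← quad_eq a₁ a₂ a₃ x]; exact ne_of_gt hx
  have hR := (((hasF (mI 0) x).mul (hasF (mI 0) x)).const_mul a₁).add
    ((((hasF (mI 1) x).mul (hasF (mI 1) x)).const_mul a₂).add
      (((hasF (mI 2) x).mul (hasF (mI 2) x)).const_mul a₃))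
  have hP := (((hasF (mI 0) x).mul (hasF (gI 0) x)).const_mul a₁).add
    ((((hasF (mI 1) x).mul (hasF (gI 1) x)).const_mul a₂).add
      (((hasF (mI 2) x).mul (hasF (gI 2) x)).const_mul a₃))
  have hQ := ((((hasF (gI 0) x).mul (hasF (gI 0) x)).const_mul a₁).add
    ((((hasF (gI 1) x).mul (hasF (gI 1) x)).const_mul a₂).add
      (((hasF (gI 2) x).mul (hasF (gI 2) x)).const_mul a₃))).const_mul d |>.const_sub 1
  have hQinv : HasFDerivAt (fun y : V => (1 - d * (a₁ * (y (gI 0) * y (gI 0)) + (a₂ * (y (gI 1) * y (gI 1)) + a₃ * (y (gI 2) * y (gI 2)))))⁻¹) _ x :=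
    (hasDerivAt_inv hQ0).comp_hasFDerivAt x hQ
  have hF := hR.add (((hP.mul hP).const_mul d).mul hQinv)
  rw [pd]; erw [hF.fderiv]
  simp only [ContinuousLinearMap.add_apply, ContinuousLinearMap.smul_apply,
    ContinuousLinearMap.neg_apply, smul_eq_mul, pr_single, mI, gI,
    Sum.inr.injEq, Sum.inl.injEq, reduceCtorEq, Fin.reduceEq, reduceIte,
    if_true, if_false, ite_true, ite_false, mul_zero, zero_mul, add_zero, zero_add, mul_one,
    neg_zero, neg_neg]
  rw [gfun, quad_eq, MAg_eq_s11]
  simp only [mPart, gPart, mI, gI, pow_two, mul_inv, Pi.add_apply, Pi.mul_apply]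
  ring

lemma pd_H1_g1 (a₁ a₂ a₃ d : ℝ) (x : V)
    (hx : 0 < 1 - d * (gPart x ⬝ᵥ (Amat a₁ a₂ a₃).mulVec (gPart x))) :
    pd (fun y : V => mPart y ⬝ᵥ (Adm a₁ a₂ a₃ d y).mulVec (mPart y)) x (gI 1)
      = 2 * d * gfun a₁ a₂ a₃ d x * MAg a₁ a₂ a₃ x * a₂ * (mPart x 1 + d * gfun a₁ a₂ a₃ d x * MAg a₁ a₂ a₃ x * gPart x 1) := by
  rw [H1_eq]
  have hQ0 : (1 - d * (a₁ * (x (gI 0) * x (gI 0)) + (a₂ * (x (gI 1) * x (gI 1)) + a₃ * (x (gI 2) * x (gI 2))))) ≠ 0 := by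
    rw [← quad_eq a₁ a₂ a₃ x]; exact ne_of_gt hx
  have hR := (((hasF (mI 0) x).mul (hasF (mI 0) x)).const_mul a₁).add
    ((((hasF (mI 1) x).mul (hasF (mI 1) x)).const_mul a₂).add
      (((hasF (mI 2) x).mul (hasF (mI 2) x)).const_mul a₃))
  have hP := (((hasF (mI 0) x).mul (hasF (gI 0) x)).const_mul a₁).add
    ((((hasF (mI 1) x).mul (hasF (gI 1) x)).const_mul a₂).add
      (((hasF (mI 2) x).mul (hasF (gI 2) x)).const_mul a₃))
  have hQ := ((((hasF (gI 0) x).mul (hasF (gI 0) x)).const_mul a₁).add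
    ((((hasF (gI 1) x).mul (hasF (gI 1) x)).const_mul a₂).add
      (((hasF (gI 2) x).mul (hasF (gI 2) x)).const_mul a₃))).const_mul d |>.const_sub 1
  have hQinv : HasFDerivAt (fun y : V => (1 - d * (a₁ * (y (gI 0) * y (gI 0)) + (a₂ * (y (gI 1) * y (gI 1)) + a₃ * (y (gI 2) * y (gI 2)))))⁻¹) _ x :=
    (hasDerivAt_inv hQ0).comp_hasFDerivAt x hQ
  have hF := hR.add (((hP.mul hP).const_mul d).mul hQinv)
  rw [pd]; erw [hF.fderiv]
  simp only [ContinuousLinearMap.add_apply, ContinuousLinearMap.smul_apply,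
    ContinuousLinearMap.neg_apply, smul_eq_mul, pr_single, mI, gI,
    Sum.inr.injEq, Sum.inl.injEq, reduceCtorEq, Fin.reduceEq, reduceIte,
    if_true, if_false, ite_true, ite_false, mul_zero, zero_mul, add_zero, zero_add, mul_one,
    neg_zero, neg_neg]
  rw [gfun, quad_eq, MAg_eq_s11]
  simp only [mPart, gPart, mI, gI, pow_two, mul_inv, Pi.add_apply, Pi.mul_apply]
  ring

lemma pd_H1_m2 (a₁ a₂ a₃ d : ℝ) (x : V)
    (hx : 0 < 1 - d * (gPart x ⬝ᵥ (Amat a₁ a₂ a₃).mulVec (gPart x))) :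
    pd (fun y : V => mPart y ⬝ᵥ (Adm a₁ a₂ a₃ d y).mulVec (mPart y)) x (mI 2)
      = 2 * a₃ * (mPart x 2 + d * gfun a₁ a₂ a₃ d x * MAg a₁ a₂ a₃ x * gPart x 2) := by
  rw [H1_eq]
  have hQ0 : (1 - d * (a₁ * (x (gI 0) * x (gI 0)) + (a₂ * (x (gI 1) * x (gI 1)) + a₃ * (x (gI 2) * x (gI 2))))) ≠ 0 := by
    rw [← quad_eq a₁ a₂ a₃ x]; exact ne_of_gt hx
  have hR := (((hasF (mI 0) x).mul (hasF (mI 0) x)).const_mul a₁).add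
    ((((hasF (mI 1) x).mul (hasF (mI 1) x)).const_mul a₂).add
      (((hasF (mI 2) x).mul (hasF (mI 2) x)).const_mul a₃))
  have hP := (((hasF (mI 0) x).mul (hasF (gI 0) x)).const_mul a₁).add
    ((((hasF (mI 1) x).mul (hasF (gI 1) x)).const_mul a₂).add
      (((hasF (mI 2) x).mul (hasF (gI 2) x)).const_mul a₃))
  have hQ := ((((hasF (gI 0) x).mul (hasF (gI 0) x)).const_mul a₁).add
    ((((hasF (gI 1) x).mul (hasF (gI 1) x)).const_mul a₂).add
      (((hasF (gI 2) x).mul (hasF (gI 2) x)).const_mul a₃))).const_mul d |>.const_sub 1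
  have hQinv : HasFDerivAt (fun y : V => (1 - d * (a₁ * (y (gI 0) * y (gI 0)) + (a₂ * (y (gI 1) * y (gI 1)) + a₃ * (y (gI 2) * y (gI 2)))))⁻¹) _ x :=
    (hasDerivAt_inv hQ0).comp_hasFDerivAt x hQ
  have hF := hR.add (((hP.mul hP).const_mul d).mul hQinv)
  rw [pd]; erw [hF.fderiv]
  simp only [ContinuousLinearMap.add_apply, ContinuousLinearMap.smul_apply,
    ContinuousLinearMap.neg_apply, smul_eq_mul, pr_single, mI, gI,
    Sum.inr.injEq, Sum.inl.injEq, reduceCtorEq, Fin.reduceEq, reduceIte,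
    if_true, if_false, ite_true, ite_false, mul_zero, zero_mul, add_zero, zero_add, mul_one,
    neg_zero, neg_neg]
  rw [gfun, quad_eq, MAg_eq_s11]
  simp only [mPart, gPart, mI, gI, pow_two, mul_inv, Pi.add_apply, Pi.mul_apply]
  ring

lemma pd_H1_g2 (a₁ a₂ a₃ d : ℝ) (x : V)
    (hx : 0 < 1 - d * (gPart x ⬝ᵥ (Amat a₁ a₂ a₃).mulVec (gPart x))) :
    pd (fun y : V => mPart y ⬝ᵥ (Adm a₁ a₂ a₃ d y).mulVec (mPart y)) x (gI 2)
      = 2 * d * gfun a₁ a₂ a₃ d x * MAg a₁ a₂ a₃ x * a₃ * (mPart x 2 + d * gfun a₁ a₂ a₃ d x * MAg a₁ a₂ a₃ x * gPart x 2) := by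
  rw [H1_eq]
  have hQ0 : (1 - d * (a₁ * (x (gI 0) * x (gI 0)) + (a₂ * (x (gI 1) * x (gI 1)) + a₃ * (x (gI 2) * x (gI 2))))) ≠ 0 := by
    rw [← quad_eq a₁ a₂ a₃ x]; exact ne_of_gt hx
  have hR := (((hasF (mI 0) x).mul (hasF (mI 0) x)).const_mul a₁).add
    ((((hasF (mI 1) x).mul (hasF (mI 1) x)).const_mul a₂).add
      (((hasF (mI 2) x).mul (hasF (mI 2) x)).const_mul a₃))
  have hP := (((hasF (mI 0) x).mul (hasF (gI 0) x)).const_mul a₁).add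
    ((((hasF (mI 1) x).mul (hasF (gI 1) x)).const_mul a₂).add
      (((hasF (mI 2) x).mul (hasF (gI 2) x)).const_mul a₃))
  have hQ := ((((hasF (gI 0) x).mul (hasF (gI 0) x)).const_mul a₁).add
    ((((hasF (gI 1) x).mul (hasF (gI 1) x)).const_mul a₂).add
      (((hasF (gI 2) x).mul (hasF (gI 2) x)).const_mul a₃))).const_mul d |>.const_sub 1
  have hQinv : HasFDerivAt (fun y : V => (1 - d * (a₁ * (y (gI 0) * y (gI 0)) + (a₂ * (y (gI 1) * y (gI 1)) + a₃ * (y (gI 2) * y (gI 2)))))⁻¹) _ x :=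
    (hasDerivAt_inv hQ0).comp_hasFDerivAt x hQ
  have hF := hR.add (((hP.mul hP).const_mul d).mul hQinv)
  rw [pd]; erw [hF.fderiv]
  simp only [ContinuousLinearMap.add_apply, ContinuousLinearMap.smul_apply,
    ContinuousLinearMap.neg_apply, smul_eq_mul, pr_single, mI, gI,
    Sum.inr.injEq, Sum.inl.injEq, reduceCtorEq, Fin.reduceEq, reduceIte,
    if_true, if_false, ite_true, ite_false, mul_zero, zero_mul, add_zero, zero_add, mul_one,
    neg_zero, neg_neg]
  rw [gfun, quad_eq, MAg_eq_s11]
  simp only [mPart, gPart, mI, gI, pow_two, mul_inv, Pi.add_apply, Pi.mul_apply]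
  ring

/-- H₁ = ⟨M, A_d M⟩ and H₂ = ⟨M,M⟩ are in involution with respect to
the deformed bracket. -/
theorem deformed_integrals_involution (a₁ a₂ a₃ d : ℝ) (x : V)
    (hx : 0 < 1 - d * (gPart x ⬝ᵥ (Amat a₁ a₂ a₃).mulVec (gPart x))) :
    bracket (cMd a₁ a₂ a₃ d) (cGd a₁ a₂ a₃ d)
      (fun y => mPart y ⬝ᵥ (Adm a₁ a₂ a₃ d y).mulVec (mPart y))
      (fun y => mPart y ⬝ᵥ mPart y) x = 0 := by
  have hg : 0 < gfun a₁ a₂ a₃ d x := by rw [gfun]; exact inv_pos.mpr hx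
  have hs2 : sg a₁ a₂ a₃ d x ^ 2 = gfun a₁ a₂ a₃ d x := Real.sq_sqrt hg.le
  have hs0 : sg a₁ a₂ a₃ d x ≠ 0 := (Real.sqrt_pos.mpr hg).ne'
  rw [bracket]
  simp only [Fin.sum_univ_three]
  rw [pd_H1_m0 a₁ a₂ a₃ d x hx, pd_H1_m1 a₁ a₂ a₃ d x hx, pd_H1_m2 a₁ a₂ a₃ d x hx,
    pd_H1_g0 a₁ a₂ a₃ d x hx, pd_H1_g1 a₁ a₂ a₃ d x hx, pd_H1_g2 a₁ a₂ a₃ d x hx]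
  simp only [pd_H2_m, pd_H2_g]
  rw [← hs2]
  simp only [cMd, cGd]
  norm_num [eps]
  field_simp
  ring
end
end

section
/- Define e_d(λ) = g(γ)·Σ_{k=1}^{3} γ_k²(1 − d a_k)/(λ − a_k). If ⟨γ,γ⟩ = 1 then e_d(λ) = (λ−u)(λ−v)/((λ−a₁)(λ−a₂)(λ−a₃)) for roots u, v of the numerator, and g(γ) = (1−du)(1−dv)/((1−da₁)(1−da₂)(1−da₃)). -/
open Matrix Filter

noncomputable section

/-- For ⟨γ,γ⟩ = 1 the function
e_d(λ) = g(γ)·Σ_k γ_k²(1−d a_k)/(λ−a_k) equals (λ−u)(λ−v)/Π(λ−a_k) for the roots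
u, v of its numerator, and g(γ) = (1−du)(1−dv)/Π(1−da_k). -/
theorem nonholonomic_elliptic_coordinates (a₁ a₂ a₃ d γ₁ γ₂ γ₃ : ℝ)
    (h₁₂ : a₁ ≠ a₂) (h₁₃ : a₁ ≠ a₃) (h₂₃ : a₂ ≠ a₃)
    (hd₁ : 1 - d * a₁ ≠ 0) (hd₂ : 1 - d * a₂ ≠ 0) (hd₃ : 1 - d * a₃ ≠ 0)
    (hunit : γ₁ ^ 2 + γ₂ ^ 2 + γ₃ ^ 2 = 1)
    (hg : 1 - d * (a₁ * γ₁ ^ 2 + a₂ * γ₂ ^ 2 + a₃ * γ₃ ^ 2) ≠ 0) :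
    ∃ u v : ℂ,
      (∀ z : ℂ, z ≠ (a₁ : ℂ) → z ≠ (a₂ : ℂ) → z ≠ (a₃ : ℂ) →
        (((1 - d * (a₁ * γ₁ ^ 2 + a₂ * γ₂ ^ 2 + a₃ * γ₃ ^ 2))⁻¹ : ℝ) : ℂ) *
          ((γ₁ : ℂ) ^ 2 * (1 - (d : ℂ) * a₁) / (z - a₁)
            + (γ₂ : ℂ) ^ 2 * (1 - (d : ℂ) * a₂) / (z - a₂)
            + (γ₃ : ℂ) ^ 2 * (1 - (d : ℂ) * a₃) / (z - a₃))
          = (z - u) * (z - v) / ((z - a₁) * (z - a₂) * (z - a₃))) ∧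
      (((1 - d * (a₁ * γ₁ ^ 2 + a₂ * γ₂ ^ 2 + a₃ * γ₃ ^ 2))⁻¹ : ℝ) : ℂ)
        = (1 - (d : ℂ) * u) * (1 - (d : ℂ) * v)
            / ((1 - (d : ℂ) * a₁) * (1 - (d : ℂ) * a₂) * (1 - (d : ℂ) * a₃)) := by
  set gC : ℂ := (((1 - d * (a₁ * γ₁ ^ 2 + a₂ * γ₂ ^ 2 + a₃ * γ₃ ^ 2))⁻¹ : ℝ) : ℂ) with hgC
  set B : ℂ := -gC * ((γ₁:ℂ)^2*(1-(d:ℂ)*a₁)*(a₂+a₃) + (γ₂:ℂ)^2*(1-(d:ℂ)*a₂)*(a₁+a₃)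
      + (γ₃:ℂ)^2*(1-(d:ℂ)*a₃)*(a₁+a₂)) with hB
  set C : ℂ := gC * ((γ₁:ℂ)^2*(1-(d:ℂ)*a₁)*(a₂*a₃) + (γ₂:ℂ)^2*(1-(d:ℂ)*a₂)*(a₁*a₃)
      + (γ₃:ℂ)^2*(1-(d:ℂ)*a₃)*(a₁*a₂)) with hC
  obtain ⟨s, hs⟩ := Complex.isAlgClosed.exists_pow_nat_eq (B^2 - 4*C) (n := 2) (by norm_num)
  have hsum : (-B + s)/2 + (-B - s)/2 = -B := by ring
  have hprod : ((-B + s)/2) * ((-B - s)/2) = C := by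
    have h : ((-B + s)/2) * ((-B - s)/2) = (B^2 - s^2)/4 := by ring
    rw [h, hs]; ring
  have hkey : gC * ((γ₁:ℂ)^2*(1-(d:ℂ)*a₁) + (γ₂:ℂ)^2*(1-(d:ℂ)*a₂)
      + (γ₃:ℂ)^2*(1-(d:ℂ)*a₃)) = 1 := by
    have hr : ((1 - d * (a₁ * γ₁ ^ 2 + a₂ * γ₂ ^ 2 + a₃ * γ₃ ^ 2))⁻¹ : ℝ)
        * (γ₁^2*(1-d*a₁) + γ₂^2*(1-d*a₂) + γ₃^2*(1-d*a₃)) = 1 := by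
      have hh : γ₁^2*(1-d*a₁) + γ₂^2*(1-d*a₂) + γ₃^2*(1-d*a₃)
          = 1 - d * (a₁ * γ₁ ^ 2 + a₂ * γ₂ ^ 2 + a₃ * γ₃ ^ 2) := by
        linear_combination hunit
      rw [hh, inv_mul_cancel₀ hg]
    rw [hgC]
    exact_mod_cast congrArg (Complex.ofReal) hr
  have hnum : ∀ z : ℂ, gC * ((γ₁:ℂ)^2*(1-(d:ℂ)*a₁)*((z-a₂)*(z-a₃))
      + (γ₂:ℂ)^2*(1-(d:ℂ)*a₂)*((z-a₁)*(z-a₃))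
      + (γ₃:ℂ)^2*(1-(d:ℂ)*a₃)*((z-a₁)*(z-a₂)))
      = (z - (-B + s)/2) * (z - (-B - s)/2) := by
    intro z
    have expand : (z - (-B + s)/2) * (z - (-B - s)/2)
        = z^2 - ((-B + s)/2 + (-B - s)/2)*z + ((-B + s)/2) * ((-B - s)/2) := by ring
    rw [expand, hsum, hprod, hB, hC]
    linear_combination z^2 * hkey
  refine ⟨(-B + s)/2, (-B - s)/2, ?_, ?_⟩
  · intro z hz1 hz2 hz3
    have e1 : z - (a₁:ℂ) ≠ 0 := sub_ne_zero.mpr hz1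
    have e2 : z - (a₂:ℂ) ≠ 0 := sub_ne_zero.mpr hz2
    have e3 : z - (a₃:ℂ) ≠ 0 := sub_ne_zero.mpr hz3
    have hgne : gC ≠ 0 := by
      rw [hgC]
      exact_mod_cast inv_ne_zero hg
    rw [← hnum z]
    field_simp [hgne]
  · have hda₁ : (1 : ℂ) - (d:ℂ)*a₁ ≠ 0 := by
      exact_mod_cast (show ((1 - d*a₁ : ℝ) : ℂ) ≠ 0 by exact_mod_cast hd₁)
    have hda₂ : (1 : ℂ) - (d:ℂ)*a₂ ≠ 0 := by
      exact_mod_cast (show ((1 - d*a₂ : ℝ) : ℂ) ≠ 0 by exact_mod_cast hd₂)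
    have hda₃ : (1 : ℂ) - (d:ℂ)*a₃ ≠ 0 := by
      exact_mod_cast (show ((1 - d*a₃ : ℝ) : ℂ) ≠ 0 by exact_mod_cast hd₃)
    have hunitC : (γ₁:ℂ)^2 + (γ₂:ℂ)^2 + (γ₃:ℂ)^2 = 1 := by
      exact_mod_cast congrArg Complex.ofReal hunit
    have h2 : (1 - (d:ℂ) * ((-B + s)/2)) * (1 - (d:ℂ) * ((-B - s)/2))
        = gC * ((1 - (d:ℂ)*a₁) * (1 - (d:ℂ)*a₂) * (1 - (d:ℂ)*a₃)) := by
      have expand : (1 - (d:ℂ) * ((-B + s)/2)) * (1 - (d:ℂ) * ((-B - s)/2))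
          = 1 - (d:ℂ)*((-B + s)/2 + (-B - s)/2) + (d:ℂ)^2*(((-B + s)/2) * ((-B - s)/2)) := by
        ring
      rw [expand, hsum, hprod, hB, hC]
      linear_combination -hkey + gC*(1-(d:ℂ)*a₁)*(1-(d:ℂ)*a₂)*(1-(d:ℂ)*a₃)*hunitC
    rw [h2]
    field_simp
end
end

section
/- For the Lagrange-type integrals H₃ = ⟨M,M⟩ + 2a₁⁻¹⟨b,γ⟩ and H₄ = ⟨M, A_d M⟩ + 2⟨b,γ⟩ with a₁ = a₂ and b = (0,0,b₃), one has {H₃, H₄}_d = 0 with respect to the deformed bracket {·,·}_d. -/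
open Matrix Filter

noncomputable section

set_option maxHeartbeats 4000000 in
/-- For a₁ = a₂ and b = (0,0,b₃), the Lagrange-type integrals
H₃ = ⟨M,M⟩ + 2a₁⁻¹⟨b,γ⟩ and H₄ = ⟨M, A_d M⟩ + 2⟨b,γ⟩ are in involution with
respect to the deformed bracket. -/
theorem lagrange_type_involution (a₁ a₃ d b₃ : ℝ) (ha₁ : a₁ ≠ 0) (x : V)
    (hx : 0 < 1 - d * (gPart x ⬝ᵥ (Amat a₁ a₁ a₃).mulVec (gPart x))) :
    bracket (cMd a₁ a₁ a₃ d) (cGd a₁ a₁ a₃ d)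
      (fun y => mPart y ⬝ᵥ mPart y + 2 * a₁⁻¹ * (b₃ * gPart y 2))
      (fun y => mPart y ⬝ᵥ (Adm a₁ a₁ a₃ d y).mulVec (mPart y) + 2 * (b₃ * gPart y 2))
      x = 0 := by
  -- explicit form of the quadratic form ⟨γ, Aγ⟩
  have hQ : gPart x ⬝ᵥ (Amat a₁ a₁ a₃).mulVec (gPart x)
      = a₁*(x (Sum.inl 0)*x (Sum.inl 0)) + a₁*(x (Sum.inl 1)*x (Sum.inl 1))
        + a₃*(x (Sum.inl 2)*x (Sum.inl 2)) := by
    simp [Amat, gPart, gI, dotProduct, Matrix.mulVec, Matrix.diagonal, Fin.sum_univ_three]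
    ring
  have hxC : (0:ℝ) < 1 - d*(a₁*(x (Sum.inl 0)*x (Sum.inl 0)) + a₁*(x (Sum.inl 1)*x (Sum.inl 1))
      + a₃*(x (Sum.inl 2)*x (Sum.inl 2))) := by rw [hQ] at hx; exact hx
  have hC : (1 - d*(a₁*(x (Sum.inl 0)*x (Sum.inl 0)) + a₁*(x (Sum.inl 1)*x (Sum.inl 1))
      + a₃*(x (Sum.inl 2)*x (Sum.inl 2)))) ≠ 0 := ne_of_gt hxC
  -- facts about s = √g
  have hgpos : 0 < gfun a₁ a₁ a₃ d x := by rw [gfun]; exact inv_pos.2 hx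
  have hspos : 0 < sg a₁ a₁ a₃ d x := Real.sqrt_pos.2 hgpos
  have hsne : sg a₁ a₁ a₃ d x ≠ 0 := ne_of_gt hspos
  have hss : sg a₁ a₁ a₃ d x * sg a₁ a₁ a₃ d x = gfun a₁ a₁ a₃ d x :=
    Real.mul_self_sqrt hgpos.le
  have hginv : (1 - d*(a₁*(x (Sum.inl 0)*x (Sum.inl 0)) + a₁*(x (Sum.inl 1)*x (Sum.inl 1))
      + a₃*(x (Sum.inl 2)*x (Sum.inl 2))))⁻¹ = sg a₁ a₁ a₃ d x * sg a₁ a₁ a₃ d x := by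
    rw [hss, gfun, hQ]
  have hg2inv : ((1 - d*(a₁*(x (Sum.inl 0)*x (Sum.inl 0)) + a₁*(x (Sum.inl 1)*x (Sum.inl 1))
      + a₃*(x (Sum.inl 2)*x (Sum.inl 2))))^2)⁻¹
      = (sg a₁ a₁ a₃ d x * sg a₁ a₁ a₃ d x) * (sg a₁ a₁ a₃ d x * sg a₁ a₁ a₃ d x) := by
    rw [sq, mul_inv, hginv]
  -- rewrite the Hamiltonians in explicit coordinate form
  have hfun3 : (fun y => mPart y ⬝ᵥ mPart y + 2 * a₁⁻¹ * (b₃ * gPart y 2))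
      = (fun y : V => y (Sum.inr 0)*y (Sum.inr 0) + y (Sum.inr 1)*y (Sum.inr 1)
          + y (Sum.inr 2)*y (Sum.inr 2) + 2*a₁⁻¹*(b₃*y (Sum.inl 2))) := by
    funext y
    simp [mPart, gPart, gI, mI, dotProduct, Fin.sum_univ_three]
  have hfun4 : (fun y => mPart y ⬝ᵥ (Adm a₁ a₁ a₃ d y).mulVec (mPart y) + 2 * (b₃ * gPart y 2))
      = (fun y : V =>
      (a₁*(y (Sum.inr 0)*y (Sum.inr 0)) + a₁*(y (Sum.inr 1)*y (Sum.inr 1)) + a₃*(y (Sum.inr 2)*y (Sum.inr 2)))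
      + d * ((1 - d*(a₁*(y (Sum.inl 0)*y (Sum.inl 0)) + a₁*(y (Sum.inl 1)*y (Sum.inl 1)) + a₃*(y (Sum.inl 2)*y (Sum.inl 2))))⁻¹
        * ((a₁*(y (Sum.inr 0)*y (Sum.inl 0)) + a₁*(y (Sum.inr 1)*y (Sum.inl 1)) + a₃*(y (Sum.inr 2)*y (Sum.inl 2)))
         * (a₁*(y (Sum.inr 0)*y (Sum.inl 0)) + a₁*(y (Sum.inr 1)*y (Sum.inl 1)) + a₃*(y (Sum.inr 2)*y (Sum.inl 2)))))
      + 2*(b₃*y (Sum.inl 2))) := by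
    funext y
    simp [Adm, Amat, gfun, gPart, mPart, gI, mI, dotProduct, Matrix.mulVec, Matrix.vecMulVec,
      Fin.sum_univ_three, Matrix.diagonal, Matrix.add_apply, Matrix.smul_apply]
    ring
  rw [hfun3, hfun4]
  -- derivatives
  have hp : ∀ a : Idx, HasFDerivAt (fun y : V => y a)
      (ContinuousLinearMap.proj (R := ℝ) (φ := fun _ : Idx => ℝ) a) x :=
    fun a => hasFDerivAt_apply a x
  have h3' : HasFDerivAt (fun y : V => y (Sum.inr 0)*y (Sum.inr 0) + y (Sum.inr 1)*y (Sum.inr 1)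
          + y (Sum.inr 2)*y (Sum.inr 2) + 2*a₁⁻¹*(b₃*y (Sum.inl 2))) _ x :=
    ((((hp (Sum.inr 0)).mul (hp (Sum.inr 0))).add ((hp (Sum.inr 1)).mul (hp (Sum.inr 1)))).add
      ((hp (Sum.inr 2)).mul (hp (Sum.inr 2)))).add
      ((((hp (Sum.inl 2)).const_mul b₃)).const_mul (2*a₁⁻¹))
  have hPf := ((((hp (Sum.inr 0)).mul (hp (Sum.inl 0))).const_mul a₁).add
      (((hp (Sum.inr 1)).mul (hp (Sum.inl 1))).const_mul a₁)).add
      (((hp (Sum.inr 2)).mul (hp (Sum.inl 2))).const_mul a₃)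
  have hCf := (((((hp (Sum.inl 0)).mul (hp (Sum.inl 0))).const_mul a₁).add
      (((hp (Sum.inl 1)).mul (hp (Sum.inl 1))).const_mul a₁)).add
      (((hp (Sum.inl 2)).mul (hp (Sum.inl 2))).const_mul a₃)).const_mul d |>.const_sub 1
  have h4' : HasFDerivAt (fun y : V =>
      (a₁*(y (Sum.inr 0)*y (Sum.inr 0)) + a₁*(y (Sum.inr 1)*y (Sum.inr 1)) + a₃*(y (Sum.inr 2)*y (Sum.inr 2)))
      + d * ((1 - d*(a₁*(y (Sum.inl 0)*y (Sum.inl 0)) + a₁*(y (Sum.inl 1)*y (Sum.inl 1)) + a₃*(y (Sum.inl 2)*y (Sum.inl 2))))⁻¹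
        * ((a₁*(y (Sum.inr 0)*y (Sum.inl 0)) + a₁*(y (Sum.inr 1)*y (Sum.inl 1)) + a₃*(y (Sum.inr 2)*y (Sum.inl 2)))
         * (a₁*(y (Sum.inr 0)*y (Sum.inl 0)) + a₁*(y (Sum.inr 1)*y (Sum.inl 1)) + a₃*(y (Sum.inr 2)*y (Sum.inl 2)))))
      + 2*(b₃*y (Sum.inl 2))) _ x :=
    (((((hp (Sum.inr 0)).mul (hp (Sum.inr 0))).const_mul a₁).add
      (((hp (Sum.inr 1)).mul (hp (Sum.inr 1))).const_mul a₁)).add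
      (((hp (Sum.inr 2)).mul (hp (Sum.inr 2))).const_mul a₃)).add
      (((((hasDerivAt_inv hC).comp_hasFDerivAt x hCf).mul (hPf.mul hPf)).const_mul d)) |>.add
      ((hp (Sum.inl 2)).const_mul b₃ |>.const_mul 2)
  simp only [bracket, Fin.sum_univ_three]
  norm_num [eps]
  simp only [pd]
  rw [h3'.fderiv, h4'.fderiv]
  simp only [cMd, cGd, MAg, Amat, mPart, gPart, gI, mI, Matrix.mulVec, Matrix.diagonal,
    dotProduct, Fin.sum_univ_three, Function.comp,
    ContinuousLinearMap.add_apply, ContinuousLinearMap.coe_smul', Pi.smul_apply,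
    ContinuousLinearMap.neg_apply, ContinuousLinearMap.proj_apply, ContinuousLinearMap.smul_apply,
    Pi.single_apply, smul_eq_mul]
  simp [hginv, hg2inv]
  field_simp
  ring
end
end
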